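/- arXiv:1304.1217 — 3 statements merged into one kernel-verified Lean document; each statement's English description precedes it below -/
import Mathlib

section
/- For vectors x, x' in [t]^n with t = 4n and Match(x,x') ≤ n/2 (where Match counts coordinates of agreement), the number of vectors y in [t]^n satisfying Match(x,y) = 1 and Match(x',y) = 0 is at least (n/2)·(t-2)^(n-1). -/
/-- Match(x,y): number of coordinates where x and y agree. -/
def matchCount {n t : ℕ} (x y : Fin n → Fin t) : ℕ :=
  (Finset.univ.filter (fun i => x i = y i)).card

/-- For x, x' in [t]^n with t = 4n and Match(x,x') ≤ n/2, the number of y with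
Match(x,y) = 1 and Match(x',y) = 0 is at least (n/2)·(t-2)^(n-1). -/
theorem stmt_0 (n t : ℕ) (hn : 1 ≤ n) (ht : t = 4 * n)
    (x x' : Fin n → Fin t) (h : matchCount x x' ≤ n / 2) :
    (n / 2) * (t - 2) ^ (n - 1) ≤
      (Finset.univ.filter (fun y : Fin n → Fin t =>
        matchCount x y = 1 ∧ matchCount x' y = 0)).card := by
  classical
  subst ht
  have hn4 : 1 ≤ 4 * n := by omega
  set D : Finset (Fin n) := Finset.univ.filter (fun i => ¬ x i = x' i) with hD
  have hDcard : n / 2 ≤ D.card := by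
    have h1 : (Finset.univ.filter (fun i => x i = x' i)).card + D.card = n := by
      rw [hD]
      simpa using Finset.card_filter_add_card_filter_not
        (s := Finset.univ) (p := fun i => x i = x' i)
    unfold matchCount at h
    omega
  set A : Fin n → Fin n → Finset (Fin (4 * n)) :=
    fun i₀ j => if j = i₀ then {x i₀} else ({x j, x' j} : Finset (Fin (4 * n)))ᶜ with hA
  -- each piece lands in the target set
  have hsub : D.biUnion (fun i₀ => Fintype.piFinset (A i₀)) ⊆
      Finset.univ.filter (fun y : Fin n → Fin (4 * n) =>
        matchCount x y = 1 ∧ matchCount x' y = 0) := by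
    intro y hy
    rw [Finset.mem_biUnion] at hy
    obtain ⟨i₀, hi₀, hy⟩ := hy
    rw [Fintype.mem_piFinset] at hy
    have hi₀' : ¬ x i₀ = x' i₀ := by
      rw [hD] at hi₀; simpa using hi₀
    have hyi₀ : y i₀ = x i₀ := by
      have := hy i₀; simp [hA] at this; exact this
    have hyj : ∀ j, j ≠ i₀ → y j ≠ x j ∧ y j ≠ x' j := by
      intro j hj
      have := hy j
      simp [hA, hj] at this
      exact this
    simp only [Finset.mem_filter, Finset.mem_univ, true_and]
    constructor
    · unfold matchCount
      have : Finset.univ.filter (fun j => x j = y j) = {i₀} := by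
        ext j
        simp only [Finset.mem_filter, Finset.mem_univ, true_and, Finset.mem_singleton]
        constructor
        · intro hxy
          by_contra hj
          exact (hyj j hj).1 hxy.symm
        · intro hj; subst hj; exact hyi₀.symm
      rw [this, Finset.card_singleton]
    · unfold matchCount
      rw [Finset.card_eq_zero, Finset.filter_eq_empty_iff]
      intro j _
      by_cases hj : j = i₀
      · subst hj
        rw [hyi₀]
        intro hc; exact hi₀' hc.symm
      · intro hc; exact (hyj j hj).2 hc.symm
  -- disjointness
  have hdisj : ∀ i₀ ∈ D, ∀ i₁ ∈ D, i₀ ≠ i₁ →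
      Disjoint (Fintype.piFinset (A i₀)) (Fintype.piFinset (A i₁)) := by
    intro i₀ _ i₁ _ hne
    rw [Finset.disjoint_left]
    intro y hy0 hy1
    rw [Fintype.mem_piFinset] at hy0 hy1
    have h0 := hy0 i₁
    have h1 := hy1 i₁
    simp [hA, Ne.symm hne] at h0 h1
    exact h0.1 h1
  -- card of each piece
  have hpiece : ∀ i₀ ∈ D, (4 * n - 2) ^ (n - 1) ≤ (Fintype.piFinset (A i₀)).card := by
    intro i₀ _
    rw [Fintype.card_piFinset]
    rw [← Finset.prod_erase_mul _ _ (Finset.mem_univ i₀)]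
    have hAi : (A i₀ i₀).card = 1 := by simp [hA]
    rw [hAi, mul_one]
    have hcard_erase : (Finset.univ.erase i₀).card = n - 1 := by
      rw [Finset.card_erase_of_mem (Finset.mem_univ i₀), Finset.card_univ, Fintype.card_fin]
    calc (4 * n - 2) ^ (n - 1) = (4 * n - 2) ^ (Finset.univ.erase i₀).card := by
          rw [hcard_erase]
      _ ≤ ∏ j ∈ Finset.univ.erase i₀, (A i₀ j).card := by
          apply Finset.pow_card_le_prod
          intro j hj
          have hj' : j ≠ i₀ := Finset.ne_of_mem_erase hj
          simp only [hA, if_neg hj']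
          rw [Finset.card_compl, Fintype.card_fin]
          have h2 : ({x j, x' j} : Finset (Fin (4 * n))).card ≤ 2 := by
            apply (Finset.card_insert_le _ _).trans
            simp
          omega
  calc n / 2 * (4 * n - 2) ^ (n - 1)
      ≤ D.card * (4 * n - 2) ^ (n - 1) := by
        exact Nat.mul_le_mul_right _ hDcard
    _ ≤ ∑ i₀ ∈ D, (Fintype.piFinset (A i₀)).card := by
        simpa using Finset.card_nsmul_le_sum D _ _ hpiece
    _ = (D.biUnion (fun i₀ => Fintype.piFinset (A i₀))).card := by
        rw [Finset.card_biUnion hdisj]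
    _ ≤ _ := Finset.card_le_card hsub
end

section
/- For t = 4n, the number of vectors y in [t]^n agreeing with a fixed x in [t]^n in more than n/2 coordinates is less than t^n / n^(n/2). -/
lemma choose_lt_two_pow' (n m : ℕ) (h1 : 1 ≤ m) (h2 : m ≤ n) : n.choose m < 2 ^ n := by
  have hsub : ({0, m} : Finset ℕ) ⊆ Finset.range (n + 1) := by
    intro a ha
    simp only [Finset.mem_insert, Finset.mem_singleton] at ha
    rcases ha with rfl | rfl <;> simp <;> omega
  have h := Finset.sum_le_sum_of_subset (f := fun k => n.choose k) hsub
  rw [Nat.sum_range_choose] at h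
  rw [Finset.sum_pair (by omega)] at h
  simp only [Nat.choose_zero_right] at h
  omega

/-- For t = 4n, the number of y ∈ [t]^n agreeing with a fixed x in more than n/2
coordinates is less than t^n / n^(n/2). -/
theorem stmt_2 (n t : ℕ) (hn : 1 ≤ n) (ht : t = 4 * n) (x : Fin n → Fin t) :
    ((Finset.univ.filter (fun y : Fin n → Fin t =>
        (n : ℝ) / 2 < (matchCount x y : ℝ))).card : ℝ)
      < (t : ℝ) ^ n / (n : ℝ) ^ ((n : ℝ) / 2) := by
  subst ht
  set m := n / 2 + 1 with hm
  have hmn : m ≤ n := by omega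
  have hm1 : 1 ≤ m := by omega
  have hnm : n ≤ 2 * m := by omega
  -- cardinality of the "fixed on S" cube
  have hA : ∀ S : Finset (Fin n),
      (Fintype.piFinset (fun i => if i ∈ S then ({x i} : Finset (Fin (4 * n)))
        else Finset.univ)).card = (4 * n) ^ (n - S.card) := by
    intro S
    rw [Fintype.card_piFinset]
    have : ∀ i : Fin n,
        (if i ∈ S then ({x i} : Finset (Fin (4 * n))) else Finset.univ).card
          = if i ∈ S then 1 else 4 * n := by
      intro i; split <;> simp
    rw [Finset.prod_congr rfl (fun i _ => this i)]
    rw [← Finset.prod_mul_prod_compl S]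
    rw [Finset.prod_ite_of_true (fun i hi => hi),
        Finset.prod_ite_of_false (fun i hi => Finset.mem_compl.mp hi)]
    simp [Finset.card_compl]
  -- the ball is covered by the union over m-subsets
  have hsubset : (Finset.univ.filter (fun y : Fin n → Fin (4 * n) =>
      (n : ℝ) / 2 < (matchCount x y : ℝ)))
      ⊆ (Finset.powersetCard m (Finset.univ : Finset (Fin n))).biUnion
        (fun S => Fintype.piFinset (fun i => if i ∈ S then ({x i} : Finset (Fin (4 * n)))
          else Finset.univ)) := by
    intro y hy
    rw [Finset.mem_filter] at hy
    have hcount : m ≤ matchCount x y := by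
      have h1 : (n : ℝ) < 2 * (matchCount x y : ℝ) := by linarith [hy.2]
      have h2 : n < 2 * matchCount x y := by exact_mod_cast h1
      omega
    obtain ⟨S, hST, hScard⟩ := Finset.exists_subset_card_eq hcount
    rw [Finset.mem_biUnion]
    refine ⟨S, ?_, ?_⟩
    · rw [Finset.mem_powersetCard]
      exact ⟨Finset.subset_univ S, hScard⟩
    · rw [Fintype.mem_piFinset]
      intro i
      by_cases hi : i ∈ S
      · have := hST hi
        rw [Finset.mem_filter] at this
        simp [hi, this.2.symm]
      · simp [hi]
  -- nat cardinality bound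
  have hcard : (Finset.univ.filter (fun y : Fin n → Fin (4 * n) =>
      (n : ℝ) / 2 < (matchCount x y : ℝ))).card ≤ n.choose m * (4 * n) ^ (n - m) := by
    calc _ ≤ _ := Finset.card_le_card hsubset
      _ ≤ ∑ S ∈ Finset.powersetCard m (Finset.univ : Finset (Fin n)),
            (Fintype.piFinset (fun i => if i ∈ S then ({x i} : Finset (Fin (4 * n)))
              else Finset.univ)).card := Finset.card_biUnion_le
      _ = ∑ S ∈ Finset.powersetCard m (Finset.univ : Finset (Fin n)),
            (4 * n) ^ (n - m) := by
          apply Finset.sum_congr rfl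
          intro S hS
          rw [hA S, (Finset.mem_powersetCard.mp hS).2]
      _ = n.choose m * (4 * n) ^ (n - m) := by
          rw [Finset.sum_const, Finset.card_powersetCard, Finset.card_univ,
            Fintype.card_fin, smul_eq_mul]
  -- real arithmetic
  have hn1 : (1 : ℝ) ≤ n := by exact_mod_cast hn
  have hn0 : (0 : ℝ) < n := by linarith
  have h4n1 : (1 : ℝ) ≤ 4 * n := by linarith
  have h4n0 : (0 : ℝ) < 4 * n := by linarith
  have hrpow_pos : (0 : ℝ) < (n : ℝ) ^ ((n : ℝ) / 2) := Real.rpow_pos_of_pos hn0 _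
  have key : (n.choose m : ℝ) * (n : ℝ) ^ ((n : ℝ) / 2) < ((4 * n : ℕ) : ℝ) ^ m := by
    have h1 : (n.choose m : ℝ) < 2 ^ n := by
      exact_mod_cast choose_lt_two_pow' n m hm1 hmn
    have hexp : (n : ℝ) / 2 ≤ (m : ℝ) := by
      have : (n : ℝ) ≤ 2 * (m : ℝ) := by exact_mod_cast hnm
      linarith
    have h2 : (2 : ℝ) ^ n * (n : ℝ) ^ ((n : ℝ) / 2) ≤ ((4 * n : ℕ) : ℝ) ^ m := by
      have e1 : ((4 * n : ℕ) : ℝ) ^ m = ((4 : ℝ) * n) ^ ((m : ℕ) : ℝ) := by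
        rw [Real.rpow_natCast]; push_cast; ring
      rw [e1]
      have e2 : ((4 : ℝ) * n) ^ ((n : ℝ) / 2) ≤ ((4 : ℝ) * n) ^ ((m : ℕ) : ℝ) :=
        Real.rpow_le_rpow_of_exponent_le h4n1 hexp
      refine le_trans ?_ e2
      rw [Real.mul_rpow (by norm_num) (le_of_lt hn0)]
      have e3 : (4 : ℝ) ^ ((n : ℝ) / 2) = (2 : ℝ) ^ n := by
        rw [show (4 : ℝ) = (2 : ℝ) ^ (2 : ℕ) by norm_num, ← Real.rpow_natCast 2 2,
          ← Real.rpow_mul (by norm_num), ← Real.rpow_natCast 2 n]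
        congr 1
        push_cast
        ring
      rw [e3]
    calc (n.choose m : ℝ) * (n : ℝ) ^ ((n : ℝ) / 2)
        < 2 ^ n * (n : ℝ) ^ ((n : ℝ) / 2) := by
          exact mul_lt_mul_of_pos_right h1 hrpow_pos
      _ ≤ _ := h2
  have hbound : ((n.choose m * (4 * n) ^ (n - m) : ℕ) : ℝ)
      < ((4 * n : ℕ) : ℝ) ^ n / (n : ℝ) ^ ((n : ℝ) / 2) := by
    rw [lt_div_iff₀ hrpow_pos]
    push_cast at key ⊢
    have hsplit : ((4 : ℝ) * n) ^ n = ((4 : ℝ) * n) ^ m * ((4 : ℝ) * n) ^ (n - m) := by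
      rw [← pow_add]; congr 1; omega
    rw [hsplit]
    have hpos : (0 : ℝ) < ((4 : ℝ) * n) ^ (n - m) := pow_pos (by linarith) _
    calc (n.choose m : ℝ) * ((4 : ℝ) * n) ^ (n - m) * (n : ℝ) ^ ((n : ℝ) / 2)
        = (n.choose m : ℝ) * (n : ℝ) ^ ((n : ℝ) / 2) * ((4 : ℝ) * n) ^ (n - m) := by ring
      _ < ((4 : ℝ) * n) ^ m * ((4 : ℝ) * n) ^ (n - m) :=
          mul_lt_mul_of_pos_right key hpos
  calc ((Finset.univ.filter (fun y : Fin n → Fin (4 * n) =>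
      (n : ℝ) / 2 < (matchCount x y : ℝ))).card : ℝ)
      ≤ ((n.choose m * (4 * n) ^ (n - m) : ℕ) : ℝ) := by exact_mod_cast hcard
    _ < _ := hbound
end

section
/- Let X be a random variable with values in [t]^n, and for a subset L ⊆ [n] let X_L denote the projection of X to coordinates in L. For any 1 ≤ l ≤ n, (l/n)·H(X) ≤ E_L[H(X_L)], where the expectation is over a uniformly random l-element subset L of [n] and H is Shannon entropy. -/
/-!
The map `L ↦ H(X_L)` is submodular, `H(X_{A ∪ B}) + H(X_{A ∩ B}) ≤ H(X_A) + H(X_B)`: this is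
Gibbs' inequality `log r ≤ r - 1` applied to the ratio between the law of `X_{A ∪ B}` and the law
in which `X_A` and `X_B` are conditionally independent given `X_{A ∩ B}`.
For a submodular `f` with `f ∅ = 0` on subsets of `[n]`, the increments
`d i = f [1, i] - f [1, i)` telescope to `f [n]`, and submodularity gives `∑_{i ∈ L} d i ≤ f L`
for every `L`. Summing over all `l`-subsets `L` counts each `i` exactly `C(n-1, l-1)` times, and
`C(n-1, l-1) / C(n, l) = l / n`.
-/

/-- Binary Shannon entropy of a probability mass function on a finite type
(with the convention 0·log 0 = 0). -/
noncomputable def shEnt {α : Type*} [Fintype α] (p : α → ℝ) : ℝ :=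
  -∑ x, p x * Real.logb 2 (p x)

/-- The distribution of the projection X_L of X ∼ p to the coordinates in L,
encoded as a distribution on `Fin n → Option (Fin t)` (coordinates outside L
are mapped to `none`). -/
noncomputable def projDist {n t : ℕ} (p : (Fin n → Fin t) → ℝ) (L : Finset (Fin n)) :
    (Fin n → Option (Fin t)) → ℝ :=
  fun z => ∑ x ∈ Finset.univ.filter
    (fun x : Fin n → Fin t => (fun i => if i ∈ L then some (x i) else none) = z), p x

open Finset

namespace Shearer

section Marginal

variable {α β γ δ : Type*} [Fintype α] [DecidableEq β] [DecidableEq γ] [DecidableEq δ]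
  (p : α → ℝ)

def marginal (F : α → β) (b : β) : ℝ :=
  ∑ x ∈ univ.filter (fun x => F x = b), p x

variable {p} in
lemma le_marginal_self (hp : ∀ x, 0 ≤ p x) (F : α → β) (x : α) : p x ≤ marginal p F (F x) :=
  single_le_sum (fun y _ => hp y) (by simp)

lemma marginal_id [DecidableEq α] : marginal p id = p := by
  funext b
  simp [marginal, sum_filter]

lemma shEnt_marginal [Fintype β] (F : α → β) :
    shEnt (marginal p F) = -∑ x, p x * Real.logb 2 (marginal p F (F x)) := by
  rw [shEnt, ← sum_fiberwise univ F]
  congr 1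
  refine sum_congr rfl fun b _ => ?_
  rw [marginal, sum_mul]
  refine sum_congr rfl fun x hx => ?_
  rw [(mem_filter.mp hx).2, marginal]

lemma shEnt_marginal_congr [Fintype β] [Fintype γ] {F : α → β} {G : α → γ}
    (h : ∀ x y, F x = F y ↔ G x = G y) : shEnt (marginal p F) = shEnt (marginal p G) := by
  simp only [shEnt_marginal, marginal, h]

variable {p} in
lemma sum_mul_marginal_ratio_le (hp : ∀ x, 0 ≤ p x) {F : α → β} {G : α → γ} {K : α → δ}
    (hKF : ∀ x y, F x = F y → K x = K y) (hKG : ∀ x y, G x = G y → K x = K y) :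
    ∑ x, p x * (marginal p F (F x) * marginal p G (G x) /
      (marginal p (fun x => (F x, G x)) (F x, G x) * marginal p K (K x))) ≤ ∑ x, p x := by
  set mFG := marginal p fun x => (F x, G x)
  set mK := marginal p K
  set c : α → α → ℝ := fun y z => p y * p z / mK (K y)
  -- Expand the marginals of `F` and `G` as sums over `y` and `z` and sum over `x` first: the `x`
  -- with `(F x, G x) = (F y, G z)` form one fibre of `(F, G)`, contributing at most `c y z`,
  -- and the fibre is empty unless `K y = K z`.
  have hexpand : ∀ x, p x * (marginal p F (F x) * marginal p G (G x) / (mFG (F x, G x) * mK (K x)))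
      = ∑ y, ∑ z, if F x = F y ∧ G x = G z then c y z * (p x / mFG (F y, G z)) else 0 := by
    intro x
    rw [marginal, marginal, sum_filter, sum_filter, sum_mul_sum, sum_div, mul_sum]
    refine sum_congr rfl fun y _ => ?_
    rw [sum_div, mul_sum]
    refine sum_congr rfl fun z _ => ?_
    by_cases hy : F x = F y <;> by_cases hz : G x = G z
    · simp only [hy, hz, hKF x y hy, c, if_true, and_self]
      ring
    all_goals simp [hy, hz, Ne.symm]
  have hfiber : ∀ y z,
      ∑ x, (if F x = F y ∧ G x = G z then c y z * (p x / mFG (F y, G z)) else 0)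
        ≤ if K z = K y then c y z else 0 := by
    intro y z
    split_ifs with hK
    · rw [← sum_filter, ← mul_sum, ← sum_div]
      have hc : 0 ≤ c y z := div_nonneg (mul_nonneg (hp y) (hp z)) (sum_nonneg fun _ _ => hp _)
      have hM : ∑ x with F x = F y ∧ G x = G z, p x = mFG (F y, G z) := by
        simp only [mFG, marginal, Prod.mk.injEq]
      rw [hM]
      exact mul_le_of_le_one_right hc (div_self_le_one _)
    · refine (sum_eq_zero fun x _ => if_neg ?_).le
      rintro ⟨hy, hz⟩
      exact hK ((hKG x z hz).symm.trans (hKF x y hy))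
  calc _ = ∑ x, ∑ y, ∑ z, if F x = F y ∧ G x = G z then c y z * (p x / mFG (F y, G z)) else 0 :=
        sum_congr rfl fun x _ => hexpand x
    _ = ∑ y, ∑ z, ∑ x, if F x = F y ∧ G x = G z then c y z * (p x / mFG (F y, G z)) else 0 := by
        rw [sum_comm]
        exact sum_congr rfl fun y _ => sum_comm
    _ ≤ ∑ y, ∑ z, if K z = K y then c y z else 0 :=
        sum_le_sum fun y _ => sum_le_sum fun z _ => hfiber y z
    _ = ∑ y, p y / mK (K y) * mK (K y) := by
        refine sum_congr rfl fun y _ => ?_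
        simp only [c, mK, marginal, ← sum_filter, mul_div_right_comm (p y), ← mul_sum]
    _ = ∑ x, p x := by
        refine sum_congr rfl fun y _ => div_mul_cancel_of_imp fun h => ?_
        exact le_antisymm (h ▸ le_marginal_self hp K y) (hp y)

lemma mul_sub_le_mul_log {u a b c d : ℝ} (hu : 0 < u) (ha : 0 < a) (hb : 0 < b) (hc : 0 < c)
    (hd : 0 < d) :
    u - u * (a * b / (c * d)) ≤ u * (Real.log c + Real.log d - Real.log a - Real.log b) := by
  have h := Real.log_le_sub_one_of_pos (show 0 < a * b / (c * d) by positivity)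
  rw [Real.log_div (by positivity) (by positivity), Real.log_mul ha.ne' hb.ne',
    Real.log_mul hc.ne' hd.ne'] at h
  nlinarith

variable {p} in
theorem shEnt_marginal_prod_add_le [Fintype β] [Fintype γ] [Fintype δ] (hp : ∀ x, 0 ≤ p x)
    {F : α → β} {G : α → γ} {K : α → δ}
    (hKF : ∀ x y, F x = F y → K x = K y) (hKG : ∀ x y, G x = G y → K x = K y) :
    shEnt (marginal p fun x => (F x, G x)) + shEnt (marginal p K) ≤
      shEnt (marginal p F) + shEnt (marginal p G) := by
  have hterm : ∀ x, p x - p x * (marginal p F (F x) * marginal p G (G x) /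
      (marginal p (fun x => (F x, G x)) (F x, G x) * marginal p K (K x))) ≤
      p x * (Real.log (marginal p (fun x => (F x, G x)) (F x, G x)) + Real.log (marginal p K (K x))
        - Real.log (marginal p F (F x)) - Real.log (marginal p G (G x))) := by
    intro x
    rcases (hp x).eq_or_lt with h0 | hpos
    · simp [← h0]
    exact mul_sub_le_mul_log hpos (hpos.trans_le (le_marginal_self hp F x))
      (hpos.trans_le (le_marginal_self hp G x)) (hpos.trans_le (le_marginal_self hp _ x))
      (hpos.trans_le (le_marginal_self hp K x))
  have hsum : 0 ≤ ∑ x, p x * (Real.log (marginal p (fun x => (F x, G x)) (F x, G x))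
      + Real.log (marginal p K (K x)) - Real.log (marginal p F (F x))
      - Real.log (marginal p G (G x))) :=
    calc (0 : ℝ) ≤ _ := sub_nonneg.mpr (sum_mul_marginal_ratio_le hp hKF hKG)
      _ = _ := by rw [sum_sub_distrib]
      _ ≤ _ := sum_le_sum fun x _ => hterm x
  have hlog2 : 0 < Real.log 2 := Real.log_pos one_lt_two
  simp only [shEnt_marginal, Real.logb]
  rw [← sub_nonneg]
  refine (div_nonneg hsum hlog2.le).trans_eq ?_
  simp only [mul_div_assoc', ← sum_div, mul_sub, mul_add, sum_sub_distrib, sum_add_distrib]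
  ring

end Marginal

section Submodular

variable {ι : Type*} [LinearOrder ι]

theorem sum_sub_filter_lt_eq {M : Type*} [AddCommGroup M] (f : Finset ι → M) (S : Finset ι) :
    ∑ i ∈ S, (f (S.filter (· ≤ i)) - f (S.filter (· < i))) = f S - f ∅ := by
  induction S using Finset.induction_on_max with
  | empty => simp
  | insert m S hlt ih =>
    have hm : m ∉ S := fun h => lt_irrefl m (hlt m h)
    have hle : (insert m S).filter (· ≤ m) = insert m S :=
      filter_true_of_mem fun j hj => (mem_insert.mp hj).elim le_of_eq fun h => (hlt j h).le
    have hlt' : (insert m S).filter (· < m) = S := by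
      rw [filter_insert, if_neg (lt_irrefl m), filter_true_of_mem hlt]
    have hS : ∀ i ∈ S, f ((insert m S).filter (· ≤ i)) - f ((insert m S).filter (· < i)) =
        f (S.filter (· ≤ i)) - f (S.filter (· < i)) := fun i hi => by
      rw [filter_insert, filter_insert, if_neg (hlt i hi).not_ge, if_neg (hlt i hi).not_gt]
    rw [sum_insert hm, hle, hlt', sum_congr rfl hS, ih, sub_add_sub_cancel]

theorem sum_sub_le_of_submodular [Fintype ι] {f : Finset ι → ℝ}
    (hf : ∀ A B, f (A ∪ B) + f (A ∩ B) ≤ f A + f B) (L : Finset ι) :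
    ∑ i ∈ L, (f {j | j ≤ i} - f {j | j < i}) ≤ f L - f ∅ := by
  rw [← sum_sub_filter_lt_eq f L]
  refine sum_le_sum fun i hi => ?_
  have h := hf (L.filter (· ≤ i)) ({j | j < i} : Finset ι)
  have hU : L.filter (· ≤ i) ∪ ({j | j < i} : Finset ι) = ({j | j ≤ i} : Finset ι) := by
    ext j
    simp only [mem_union, mem_filter, mem_univ, true_and]
    grind
  have hI : L.filter (· ≤ i) ∩ ({j | j < i} : Finset ι) = L.filter (· < i) := by
    ext j
    simp only [mem_inter, mem_filter, mem_univ, true_and]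
    grind
  rw [hU, hI] at h
  linarith

theorem sum_powersetCard_sum [Fintype ι] {M : Type*} [AddCommMonoid M] (g : ι → M) {l : ℕ}
    (hl : 1 ≤ l) :
    ∑ L ∈ powersetCard l (univ : Finset ι), ∑ i ∈ L, g i =
      (Fintype.card ι - 1).choose (l - 1) • ∑ i, g i := by
  classical
  rw [sum_comm' (t' := univ) (s' := fun i => (powersetCard l univ).filter ({i} ⊆ ·))
    (fun L i => by simp [singleton_subset_iff, and_comm]), smul_sum]
  refine sum_congr rfl fun i _ => ?_
  rw [sum_const, card_filter_powersetCard_subset _ _ _ (subset_univ _) (by simpa using hl),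
    card_univ, card_singleton]

theorem choose_mul_le_sum_powersetCard [Fintype ι] {f : Finset ι → ℝ}
    (hf : ∀ A B, f (A ∪ B) + f (A ∩ B) ≤ f A + f B) (h0 : f ∅ = 0) {l : ℕ} (hl : 1 ≤ l) :
    ((Fintype.card ι - 1).choose (l - 1) : ℝ) * f univ ≤
      ∑ L ∈ powersetCard l (univ : Finset ι), f L := by
  have htel := sum_sub_filter_lt_eq f univ
  rw [h0, sub_zero] at htel
  calc _ = ∑ L ∈ powersetCard l (univ : Finset ι), ∑ i ∈ L, (f {j | j ≤ i} - f {j | j < i}) := by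
        rw [sum_powersetCard_sum _ hl, nsmul_eq_mul, htel]
    _ ≤ _ := sum_le_sum fun L _ => by simpa [h0] using sum_sub_le_of_submodular hf L

end Submodular

section Projection

variable {ι κ : Type*} [DecidableEq ι]

def proj (L : Finset ι) (x : ι → κ) : ι → Option κ :=
  fun i => if i ∈ L then some (x i) else none

lemma proj_eq_proj_iff {L : Finset ι} {x y : ι → κ} :
    proj L x = proj L y ↔ ∀ i ∈ L, x i = y i := by
  refine funext_iff.trans (forall_congr' fun i => ?_)
  by_cases hi : i ∈ L <;> simp [proj, hi]

variable {n t : ℕ} (p : (Fin n → Fin t) → ℝ)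

lemma projDist_eq_marginal (L : Finset (Fin n)) : projDist p L = marginal p (proj L) := rfl

theorem shEnt_projDist_union_add_inter_le (hp : ∀ x, 0 ≤ p x) (A B : Finset (Fin n)) :
    shEnt (projDist p (A ∪ B)) + shEnt (projDist p (A ∩ B)) ≤
      shEnt (projDist p A) + shEnt (projDist p B) := by
  simp only [projDist_eq_marginal]
  rw [shEnt_marginal_congr p (G := fun x => (proj A x, proj B x))
    fun x y => by simp [proj_eq_proj_iff, or_imp, forall_and]]
  refine shEnt_marginal_prod_add_le hp ?_ ?_ <;>
  · simp only [proj_eq_proj_iff, mem_inter]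
    tauto

lemma shEnt_projDist_empty (hsum : ∑ x, p x = 1) : shEnt (projDist p ∅) = 0 := by
  rw [projDist_eq_marginal, shEnt_marginal_congr p (G := fun _ => ())
    fun x y => by simp [proj_eq_proj_iff]]
  simp [shEnt, marginal, hsum]

lemma shEnt_projDist_univ : shEnt (projDist p univ) = shEnt p := by
  rw [projDist_eq_marginal, shEnt_marginal_congr p (G := id)
    fun x y => by rw [proj_eq_proj_iff]; simp [funext_iff], marginal_id]

end Projection

end Shearer

/-- Shearer-type lemma of Chung, Graham, Frankl and Shearer: (l/n)·H(X) is at most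
the average of H(X_L) over uniformly random l-element subsets L of [n]. -/
theorem stmt_6 (n t : ℕ) (p : (Fin n → Fin t) → ℝ)
    (hp : ∀ x, 0 ≤ p x) (hsum : ∑ x, p x = 1)
    (l : ℕ) (hl1 : 1 ≤ l) (hln : l ≤ n) :
    ((l : ℝ) / (n : ℝ)) * shEnt p ≤
      (1 / (n.choose l : ℝ)) *
        ∑ L ∈ Finset.powersetCard l (Finset.univ : Finset (Fin n)), shEnt (projDist p L) := by
  have hmain : ((n - 1).choose (l - 1) : ℝ) * shEnt p ≤
      ∑ L ∈ powersetCard l (univ : Finset (Fin n)), shEnt (projDist p L) := by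
    simpa [Shearer.shEnt_projDist_univ] using Shearer.choose_mul_le_sum_powersetCard
      (f := fun L => shEnt (projDist p L))
      (Shearer.shEnt_projDist_union_add_inter_le p hp) (Shearer.shEnt_projDist_empty p hsum) hl1
  have hn : (0 : ℝ) < n := by exact_mod_cast hl1.trans hln
  have hC : (0 : ℝ) < n.choose l := by exact_mod_cast Nat.choose_pos hln
  have hchoose : (n.choose l : ℝ) * l = n * (n - 1).choose (l - 1) := by
    have := Nat.add_one_mul_choose_eq (n - 1) (l - 1)
    rw [Nat.sub_add_cancel (hl1.trans hln), Nat.sub_add_cancel hl1] at this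
    exact_mod_cast this.symm
  rw [div_mul_eq_mul_div, one_div_mul_eq_div, div_le_div_iff₀ hn hC]
  calc (l : ℝ) * shEnt p * n.choose l = n * ((n - 1).choose (l - 1) * shEnt p) := by
        rw [mul_right_comm, mul_comm (l : ℝ), hchoose, mul_assoc]
    _ ≤ _ := by rw [mul_comm]; exact mul_le_mul_of_nonneg_right hmain hn.le
end
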